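/- Let k ≥ 2 be an integer, let p₁, p_k be real numbers with 0 < p₁ < p_k < 1 and p_k < k·p₁, let W, v_k be real numbers and L > 0, and let U : ℝ → ℝ be differentiable with U'(x) > 0 for all x and with U' strictly antitone on ℝ (hence U is strictly increasing and strictly concave). Define H^1(L_c) = p₁·U(W − p₁·L_c − L + L_c) + (1 − p₁)·U(W − p₁·L_c) and H^k(t, L_c) = p₁·U(v_k·W − p_k·L_c − L − (k−1)·t + L_c) + (p_k − p₁)·U(v_k·W − p_k·L_c − L + t + L_c) + (1 − p_k)·U(v_k·W − p_k·L_c), and the objective J(s, t, L_c) = (1 − s)·H^1(L_c) + s·H^k(t, L_c) over the feasible set {(s,t,L_c) : 0 ≤ s ≤ 1, 0 ≤ t ≤ L, L_c ≥ 0}. If W − p₁·L ≤ v_k·W − p_k·L, then (s, t, L_c) = (1, 0, L) is a maximizer of J over the feasible set, with optimal value U(v_k·W − p_k·L). -/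

import Mathlib

/-!
Both sides of the choice are lotteries whose expected wealth is at most `v_k·W − p_k·L`:
actuarially fair insurance makes the standalone expected wealth `W − p₁·L`, and in the
consortium each unit of fine `t` changes the expected wealth by `p_k − k·p₁ < 0`. Since `U` is
increasing and concave, Jensen's inequality bounds the expected utility of each lottery by
`U(v_k·W − p_k·L)`, and `(1, 0, L)` attains this value with certain wealth.
-/

open Finset

theorem ConcaveOn.sum_mul_le_of_monotone {ι : Type*} {U : ℝ → ℝ}
    (hconc : ConcaveOn ℝ Set.univ U) (hmono : Monotone U) {t : Finset ι} {w x : ι → ℝ}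
    (hw₀ : ∀ i ∈ t, 0 ≤ w i) (hw₁ : ∑ i ∈ t, w i = 1) {m : ℝ}
    (hm : ∑ i ∈ t, w i * x i ≤ m) :
    ∑ i ∈ t, w i * U (x i) ≤ U m :=
  (hconc.le_map_sum hw₀ hw₁ fun _ _ => Set.mem_univ _).trans (hmono hm)

theorem standalone_expectedUtility_le {U : ℝ → ℝ} (hconc : ConcaveOn ℝ Set.univ U)
    (hmono : Monotone U) {p₁ W L Lc : ℝ} (hp₁₀ : 0 ≤ p₁) (hp₁₁ : p₁ ≤ 1) :
    p₁ * U (W - p₁ * Lc - L + Lc) + (1 - p₁) * U (W - p₁ * Lc) ≤ U (W - p₁ * L) := by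
  simpa [Fin.sum_univ_two] using hconc.sum_mul_le_of_monotone hmono (t := univ)
    (w := ![p₁, 1 - p₁]) (x := ![W - p₁ * Lc - L + Lc, W - p₁ * Lc])
    (by simp [Fin.forall_fin_two, hp₁₀, hp₁₁]) (by simp) (m := W - p₁ * L)
    (le_of_eq (by simp; ring))

theorem consortium_expectedUtility_le {U : ℝ → ℝ} (hconc : ConcaveOn ℝ Set.univ U)
    (hmono : Monotone U) {k : ℕ} {p₁ pk W vk L t Lc : ℝ} (hp₁ : 0 ≤ p₁) (hp₁k : p₁ ≤ pk)
    (hpk1 : pk ≤ 1) (hpk : pk ≤ k * p₁) (ht : 0 ≤ t) :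
    p₁ * U (vk * W - pk * Lc - L - ((k : ℝ) - 1) * t + Lc) +
      (pk - p₁) * U (vk * W - pk * Lc - L + t + Lc) + (1 - pk) * U (vk * W - pk * Lc) ≤
      U (vk * W - pk * L) := by
  have hmean : p₁ * (vk * W - pk * Lc - L - ((k : ℝ) - 1) * t + Lc) +
      (pk - p₁) * (vk * W - pk * Lc - L + t + Lc) + (1 - pk) * (vk * W - pk * Lc) ≤
      vk * W - pk * L := by
    linarith [mul_nonneg ht (sub_nonneg.2 hpk)]
  simpa [Fin.sum_univ_three, add_assoc] using hconc.sum_mul_le_of_monotone hmono (t := univ)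
    (w := ![p₁, pk - p₁, 1 - pk])
    (x := ![vk * W - pk * Lc - L - ((k : ℝ) - 1) * t + Lc, vk * W - pk * Lc - L + t + Lc,
      vk * W - pk * Lc])
    (by simp [Fin.forall_fin_succ, hp₁, hp₁k, hpk1]) (by simp [Fin.sum_univ_three])
    (m := vk * W - pk * L)
    (by simpa [Fin.sum_univ_three, add_assoc] using hmean)

theorem scenarioB_optimal_contract_participation_general
    (k : ℕ) (p₁ pk W vk L : ℝ)
    (hp₁ : 0 < p₁) (hp₁k : p₁ < pk) (hpk1 : pk < 1) (hpk : pk < (k : ℝ) * p₁)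
    (U : ℝ → ℝ) (hUdiff : Differentiable ℝ U)
    (hU' : ∀ x : ℝ, 0 < deriv U x) (hU'anti : StrictAnti (deriv U))
    (H1 : ℝ → ℝ)
    (hH1 : ∀ Lc : ℝ, H1 Lc =
      p₁ * U (W - p₁ * Lc - L + Lc) + (1 - p₁) * U (W - p₁ * Lc))
    (Hk : ℝ → ℝ → ℝ)
    (hHk : ∀ t Lc : ℝ, Hk t Lc =
      p₁ * U (vk * W - pk * Lc - L - ((k : ℝ) - 1) * t + Lc) +
      (pk - p₁) * U (vk * W - pk * Lc - L + t + Lc) +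
      (1 - pk) * U (vk * W - pk * Lc))
    (J : ℝ × ℝ × ℝ → ℝ)
    (hJ : ∀ x : ℝ × ℝ × ℝ, J x = (1 - x.1) * H1 x.2.2 + x.1 * Hk x.2.1 x.2.2)
    (F : Set (ℝ × ℝ × ℝ))
    (hF : F = {x : ℝ × ℝ × ℝ |
      0 ≤ x.1 ∧ x.1 ≤ 1 ∧ 0 ≤ x.2.1 ∧ x.2.1 ≤ L ∧ 0 ≤ x.2.2})
    (hcase : W - p₁ * L ≤ vk * W - pk * L) :
    IsMaxOn J F (1, 0, L) ∧ J (1, 0, L) = U (vk * W - pk * L) := by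
  have hmono : Monotone U := (strictMono_of_deriv_pos hU').monotone
  have hconc : ConcaveOn ℝ Set.univ U :=
    (hU'anti.strictConcaveOn_univ_of_deriv hUdiff.continuous).concaveOn
  have hval : J (1, 0, L) = U (vk * W - pk * L) := by
    simp only [hJ, hHk]
    ring_nf
  refine ⟨fun ⟨s, t, Lc⟩ hx => ?_, hval⟩
  obtain ⟨hs₀, hs₁, ht₀, -, -⟩ : 0 ≤ s ∧ s ≤ 1 ∧ 0 ≤ t ∧ t ≤ L ∧ 0 ≤ Lc := by
    rwa [hF] at hx
  have hH1 : H1 Lc ≤ U (vk * W - pk * L) := hH1 Lc ▸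
    (standalone_expectedUtility_le hconc hmono hp₁.le (by linarith)).trans (hmono hcase)
  have hHk : Hk t Lc ≤ U (vk * W - pk * L) := hHk t Lc ▸
    consortium_expectedUtility_le hconc hmono hp₁.le hp₁k.le hpk1.le hpk.le ht₀
  show J (s, t, Lc) ≤ J (1, 0, L)
  rw [hval, hJ]
  calc (1 - s) * H1 Lc + s * Hk t Lc
      ≤ (1 - s) * U (vk * W - pk * L) + s * U (vk * W - pk * L) := by
        gcongr
    _ = U (vk * W - pk * L) := by ring

/-- Scenario B contract design (Theorem 2, second case): if `W − p₁·L ≤ v_k·W − p_k·L`,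
then `(s, t, L_c) = (1, 0, L)` maximizes the objective
`J(s,t,L_c) = (1 − s)·H¹(L_c) + s·Hᵏ(t, L_c)` over the feasible set
`{(s,t,L_c) : 0 ≤ s ≤ 1, 0 ≤ t ≤ L, L_c ≥ 0}`, with optimal value `U(v_k·W − p_k·L)`. -/
theorem scenarioB_optimal_contract_participation
    (k : ℕ) (hk : 2 ≤ k) (p₁ pk W vk L : ℝ) (hL : 0 < L)
    (hp₁ : 0 < p₁) (hp₁k : p₁ < pk) (hpk1 : pk < 1) (hpk : pk < (k : ℝ) * p₁)
    (U : ℝ → ℝ) (hUdiff : Differentiable ℝ U)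
    (hU' : ∀ x : ℝ, 0 < deriv U x) (hU'anti : StrictAnti (deriv U))
    (H1 : ℝ → ℝ)
    (hH1 : ∀ Lc : ℝ, H1 Lc =
      p₁ * U (W - p₁ * Lc - L + Lc) + (1 - p₁) * U (W - p₁ * Lc))
    (Hk : ℝ → ℝ → ℝ)
    (hHk : ∀ t Lc : ℝ, Hk t Lc =
      p₁ * U (vk * W - pk * Lc - L - ((k : ℝ) - 1) * t + Lc) +
      (pk - p₁) * U (vk * W - pk * Lc - L + t + Lc) +
      (1 - pk) * U (vk * W - pk * Lc))
    (J : ℝ × ℝ × ℝ → ℝ)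
    (hJ : ∀ x : ℝ × ℝ × ℝ, J x = (1 - x.1) * H1 x.2.2 + x.1 * Hk x.2.1 x.2.2)
    (F : Set (ℝ × ℝ × ℝ))
    (hF : F = {x : ℝ × ℝ × ℝ |
      0 ≤ x.1 ∧ x.1 ≤ 1 ∧ 0 ≤ x.2.1 ∧ x.2.1 ≤ L ∧ 0 ≤ x.2.2})
    (hcase : W - p₁ * L ≤ vk * W - pk * L) :
    IsMaxOn J F (1, 0, L) ∧ J (1, 0, L) = U (vk * W - pk * L) :=
  scenarioB_optimal_contract_participation_general k p₁ pk W vk L hp₁ hp₁k hpk1 hpk U hUdiff hU'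
    hU'anti H1 hH1 Hk hHk J hJ F hF hcase
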